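/- arXiv:2012.06411 — 3 statements merged into one kernel-verified Lean document; each statement's English description precedes it below -/
import Mathlib

section
/- Let X be a real Banach space and F a closed subspace of X such that the quotient X/F is finite-dimensional with dim(X/F) = m ≥ 1. Then there exists a bounded linear projection P : X → X with range contained in F, with P(f) = f for every f ∈ F, and with operator norm ‖P‖ ≤ 1 + 2m. -/
/-!
Choose unit vectors `e₁, …, eₘ` of `X ⧸ F` maximising `|det (e₁, …, eₘ)|` (compactness of the
product of unit spheres). By Cramer's rule the `i`-th coordinate of `v` in this basis is
`det (e with eᵢ replaced by v) / det e`, and maximality bounds it by `‖v‖`: this is an Auerbach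
basis. Lifting each `eᵢ` to some `xᵢ ∈ X` with `‖xᵢ‖ < 2`, the map
`P y = y - ∑ eᵢ*(Q y) • xᵢ` kills `Q`, fixes `F = ker Q`, and has norm at most `1 + 2m`.
-/

open Module Function

namespace Module.Basis

variable {ι E : Type*} [Fintype ι] [NormedAddCommGroup E] [NormedSpace ℝ E]

def IsAuerbach (z : Basis ι ℝ E) : Prop :=
  (∀ i, ‖z i‖ = 1) ∧ ∀ x i, |z.repr x i| ≤ ‖x‖

variable [DecidableEq ι]

theorem abs_det_update_le {b : Basis ι ℝ E} {e : ι → E} (he : ∀ i, ‖e i‖ = 1)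
    (hmax : ∀ v : ι → E, (∀ i, ‖v i‖ = 1) → |b.det v| ≤ |b.det e|) (i : ι) (x : E) :
    |b.det (update e i x)| ≤ |b.det e| * ‖x‖ := by
  rcases eq_or_ne x 0 with rfl | hx
  · simp
  have hunit : ∀ j, ‖update e i (‖x‖⁻¹ • x) j‖ = 1 := by
    intro j
    rcases eq_or_ne j i with rfl | hj
    · rw [update_self]; exact norm_smul_inv_norm hx
    · simpa [update_of_ne hj] using he j
  calc |b.det (update e i x)| = ‖x‖ * |b.det (update e i (‖x‖⁻¹ • x))| := by
        rw [b.det.map_update_smul, smul_eq_mul, abs_mul, abs_inv, abs_norm,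
          mul_inv_cancel_left₀ (norm_ne_zero_iff.2 hx)]
    _ ≤ |b.det e| * ‖x‖ := by
        rw [mul_comm]
        exact mul_le_mul_of_nonneg_right (hmax _ hunit) (norm_nonneg x)

variable [FiniteDimensional ℝ E]

theorem continuous_det (b : Basis ι ℝ E) : Continuous (b.det : (ι → E) → ℝ) := by
  change Continuous fun v : ι → E => (Matrix.of fun i j => b.coord i (v j)).det
  fun_prop

theorem exists_isMaxOn_abs_det (b : Basis ι ℝ E) :
    ∃ e : ι → E, (∀ i, ‖e i‖ = 1) ∧ b.det e ≠ 0 ∧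
      ∀ v : ι → E, (∀ i, ‖v i‖ = 1) → |b.det v| ≤ |b.det e| := by
  set K : Set (ι → E) := Set.univ.pi fun _ => Metric.sphere 0 1
  have hK : ∀ {v : ι → E}, v ∈ K ↔ ∀ i, ‖v i‖ = 1 := by simp [K]
  set w : ι → E := fun i => ‖b i‖⁻¹ • b i
  have hw : w ∈ K := hK.2 fun i => norm_smul_inv_norm (b.ne_zero i)
  have hdet_w : b.det w ≠ 0 := by
    have : b.det w = ∏ i, ‖b i‖⁻¹ := by
      simpa [b.det_self] using b.det.toMultilinearMap.map_smul_univ (fun i => ‖b i‖⁻¹) b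
    rw [this]
    exact Finset.prod_ne_zero_iff.2 fun i _ => inv_ne_zero (norm_ne_zero_iff.2 (b.ne_zero i))
  obtain ⟨e, he, hmax⟩ := (isCompact_univ_pi fun _ => isCompact_sphere (0 : E) 1).exists_isMaxOn
    ⟨w, hw⟩ (continuous_abs.comp b.continuous_det).continuousOn
  refine ⟨e, hK.1 he, fun h => ?_, fun v hv => hmax (hK.2 hv)⟩
  have hle : |b.det w| ≤ |b.det e| := hmax hw
  rw [h, abs_zero] at hle
  exact hdet_w (abs_nonpos_iff.1 hle)

theorem exists_isAuerbach (b : Basis ι ℝ E) : ∃ z : Basis ι ℝ E, z.IsAuerbach := by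
  obtain ⟨e, he, hdet, hmax⟩ := b.exists_isMaxOn_abs_det
  obtain ⟨hli, hsp⟩ := b.is_basis_iff_det.2 (isUnit_iff_ne_zero.2 hdet)
  refine ⟨Basis.mk hli hsp.ge, fun i => by simpa using he i, fun x i => ?_⟩
  have hcramer : b.det e * (Basis.mk hli hsp.ge).repr x i = b.det (update e i x) := by
    simpa [Basis.coord_apply] using
      congr($(b.det_smul_mk_coord_eq_det_update hli hsp.ge i) x)
  refine le_of_mul_le_mul_left ?_ (abs_pos.2 hdet)
  rw [← abs_mul, hcramer]
  exact abs_det_update_le he hmax i x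

end Module.Basis

section KerProjection

variable {X Y ι : Type*} [NormedAddCommGroup X] [NormedSpace ℝ X] [NormedAddCommGroup Y]
  [NormedSpace ℝ Y] [FiniteDimensional ℝ Y] [Fintype ι]

/-- The projection onto `ker Q` along the span of lifts `x i` of the basis vectors `z i`. -/
noncomputable def kerProjection (Q : X →L[ℝ] Y) (z : Basis ι ℝ Y) (x : ι → X) : X →L[ℝ] X :=
  ContinuousLinearMap.id ℝ X - ∑ i, ((z.coord i).toContinuousLinearMap.comp Q).smulRight (x i)

variable {Q : X →L[ℝ] Y} {z : Basis ι ℝ Y} {x : ι → X}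

theorem kerProjection_apply (y : X) :
    kerProjection Q z x y = y - ∑ i, z.repr (Q y) i • x i := by
  simp [kerProjection, Basis.coord_apply]

theorem map_kerProjection (hx : ∀ i, Q (x i) = z i) (y : X) : Q (kerProjection Q z x y) = 0 := by
  simp [kerProjection_apply, hx, z.sum_repr]

theorem kerProjection_eq_self {y : X} (hy : Q y = 0) : kerProjection Q z x y = y := by
  simp [kerProjection_apply, hy]

theorem norm_kerProjection_le (hQ : ‖Q‖ ≤ 1) (hz : ∀ v i, |z.repr v i| ≤ ‖v‖) {C : ℝ}
    (hx : ∀ i, ‖x i‖ ≤ C) : ‖kerProjection Q z x‖ ≤ 1 + Fintype.card ι * C := by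
  have hcoord : ∀ i, ‖(z.coord i).toContinuousLinearMap.comp Q‖ ≤ 1 := fun i =>
    ContinuousLinearMap.opNorm_le_bound _ zero_le_one fun y => by
      calc |z.repr (Q y) i| ≤ ‖Q y‖ := hz (Q y) i
        _ ≤ 1 * ‖y‖ := Q.le_of_opNorm_le hQ y
  calc ‖kerProjection Q z x‖
      ≤ ‖ContinuousLinearMap.id ℝ X‖ +
          ∑ i, ‖((z.coord i).toContinuousLinearMap.comp Q).smulRight (x i)‖ :=
        (norm_sub_le _ _).trans (add_le_add_right (norm_sum_le _ _) _)
    _ ≤ 1 + ∑ _i : ι, C := by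
        gcongr with i
        · exact ContinuousLinearMap.norm_id_le
        · rw [ContinuousLinearMap.norm_smulRight_apply]
          exact (mul_le_of_le_one_left (norm_nonneg _) (hcoord i)).trans (hx i)
    _ = 1 + Fintype.card ι * C := by simp

end KerProjection

theorem statement0_general {X : Type*} [NormedAddCommGroup X] [NormedSpace ℝ X]
    (F : Submodule ℝ X) (hFc : IsClosed (F : Set X)) (m : ℕ)
    [FiniteDimensional ℝ (X ⧸ F)] (hdim : Module.finrank ℝ (X ⧸ F) = m) :
    ∃ P : X →L[ℝ] X, (∀ x : X, P x ∈ F) ∧ (∀ f ∈ F, P f = f) ∧ ‖P‖ ≤ 1 + 2 * m := by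
  have : IsClosed (F : Set X) := hFc
  obtain ⟨z, hz_norm, hz_coord⟩ := (Module.finBasisOfFinrankEq ℝ (X ⧸ F) hdim).exists_isAuerbach
  have hQ : ‖F.mkQL‖ ≤ 1 := ContinuousLinearMap.opNorm_le_bound _ zero_le_one fun y => by
    simpa using Submodule.Quotient.norm_mk_le F y
  have hlift : ∀ i, ∃ x : X, F.mkQL x = z i ∧ ‖x‖ ≤ 2 := fun i => by
    obtain ⟨x, hx, hx_lt⟩ := Submodule.Quotient.norm_mk_lt (z i) one_pos
    exact ⟨x, hx, by linarith [hz_norm i]⟩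
  choose x hx_mk hx_norm using hlift
  refine ⟨kerProjection F.mkQL z x, fun y => ?_, fun f hf => ?_, ?_⟩
  · exact (Submodule.Quotient.mk_eq_zero F).1 (map_kerProjection hx_mk y)
  · exact kerProjection_eq_self ((Submodule.Quotient.mk_eq_zero F).2 hf)
  · simpa [mul_comm] using norm_kerProjection_le hQ hz_coord hx_norm

/-- If `F` is a closed subspace of a real Banach space `X` with
`dim (X ⧸ F) = m ≥ 1`, then there is a bounded linear projection `P : X → X` whose range
is contained in `F`, which fixes `F` pointwise, and whose operator norm is at most `1 + 2m`. -/
theorem statement0 {X : Type*} [NormedAddCommGroup X] [NormedSpace ℝ X] [CompleteSpace X]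
    (F : Submodule ℝ X) (hFc : IsClosed (F : Set X)) (m : ℕ) (hm : 1 ≤ m)
    [FiniteDimensional ℝ (X ⧸ F)] (hdim : Module.finrank ℝ (X ⧸ F) = m) :
    ∃ P : X →L[ℝ] X, (∀ x : X, P x ∈ F) ∧ (∀ f ∈ F, P f = f) ∧ ‖P‖ ≤ 1 + 2 * m :=
  statement0_general F hFc m hdim
end

section
/- For n ≥ 1 let u_n : ℕ≥1 → ℝ be the sequence u_n = 2^{(1−n)/2} Σ_{j=2^{n−1}}^{2^n−1} e_j, where (e_j) is the unit vector basis. Then for every N ≥ 1, the Schreier-2 norm of u_1 + u_2 + ... + u_N equals 1: sup{ (Σ_{j∈A} (Σ_{n=1}^N (u_n)_j)²)^{1/2} : A admissible } = 1. -/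
/-- A finite nonempty set `A` of positive integers is *admissible* if `|A| ≤ min A`.
(Note that `A.card ≤ A.min'` forces every element of `A` to be a positive integer.) -/
def Admissible (A : Finset ℕ) : Prop :=
  ∃ h : A.Nonempty, A.card ≤ A.min' h

/-- The Schreier-2 norm of a sequence: `‖x‖_{S²} = sup { √(∑_{j ∈ A} x_j²) : A admissible }`,
the norm of the 2-convexification `S²` of the Schreier space. -/
noncomputable def schreierTwoNorm (x : ℕ → ℝ) : ℝ :=
  sSup {r : ℝ | ∃ A : Finset ℕ, Admissible A ∧ r = Real.sqrt (∑ j ∈ A, x j ^ 2)}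

/-- The block sequences `u_n = 2^{(1-n)/2} ∑_{j=2^{n-1}}^{2^n - 1} e_j` (for `n ≥ 1`). -/
noncomputable def schreierBlock (n : ℕ) : ℕ → ℝ :=
  fun j => if 2 ^ (n - 1) ≤ j ∧ j ≤ 2 ^ n - 1 then (2 : ℝ) ^ ((1 - (n : ℝ)) / 2) else 0


/-!
On `[1, 2^N)` the square of `x = u_1 + ⋯ + u_N` is the dyadic weight `w j = 2^{-⌊log₂ j⌋}`, and
`x` vanishes beyond. Since `w` is antitone, an admissible set with minimum `m` carries at most the
weight of the `m` consecutive integers `m, …, 2m - 1`, which is exactly `1`: passing from `m` to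
`m + 1` trades `w m` for `w (2m) + w (2m + 1) = w m`. The set `{1}` attains the bound.
-/

open Finset

lemma Finset.sum_le_sum_range_add_of_antitone {M : Type*} [AddCommMonoid M] [PartialOrder M]
    [IsOrderedAddMonoid M] {f : ℕ → M} (hf : Antitone f) (A : Finset ℕ) {c : ℕ}
    (hc : ∀ j ∈ A, c ≤ j) : ∑ j ∈ A, f j ≤ ∑ i ∈ range #A, f (c + i) := by
  induction A using Finset.induction_on_max with
  | empty => simp
  | insert a s has ih =>
    have has' : a ∉ s := fun h => lt_irrefl a (has a h)
    have hca : c + #s ≤ a := by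
      have hsub : s ⊆ Ico c a := fun j hj => mem_Ico.2 ⟨hc j (mem_insert_of_mem hj), has j hj⟩
      have := card_le_card hsub
      have := hc a (mem_insert_self a s)
      rw [Nat.card_Ico] at *
      omega
    rw [sum_insert has', card_insert_of_notMem has', sum_range_succ, add_comm]
    exact add_le_add (ih fun j hj => hc j (mem_insert_of_mem hj)) (hf hca)

noncomputable def dyadicWeight (j : ℕ) : ℝ := (2 ^ Nat.log 2 j : ℝ)⁻¹

lemma dyadicWeight_nonneg (j : ℕ) : 0 ≤ dyadicWeight j := by
  unfold dyadicWeight; positivity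

lemma dyadicWeight_antitone : Antitone dyadicWeight := fun _ _ h =>
  inv_anti₀ (by positivity) (pow_le_pow_right₀ one_le_two (Nat.log_mono_right h))

lemma dyadicWeight_two_mul_add_two_mul_add_one {m : ℕ} (hm : m ≠ 0) :
    dyadicWeight (2 * m) + dyadicWeight (2 * m + 1) = dyadicWeight m := by
  have hlog : Nat.log 2 (2 * m) = Nat.log 2 m + 1 := by
    rw [mul_comm]; exact Nat.log_mul_base one_lt_two hm
  have hlog' : Nat.log 2 (2 * m + 1) = Nat.log 2 m + 1 := by
    have hdiv := Nat.log_div_base 2 (2 * m + 1)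
    have : 1 ≤ Nat.log 2 (2 * m + 1) := Nat.le_log_of_pow_le one_lt_two (by omega)
    rw [show (2 * m + 1) / 2 = m by omega] at hdiv
    omega
  simp only [dyadicWeight, hlog, hlog', pow_succ]
  ring

lemma sum_range_dyadicWeight_add_self {m : ℕ} (hm : 0 < m) :
    ∑ i ∈ range m, dyadicWeight (m + i) = 1 := by
  induction m, hm using Nat.le_induction with
  | base => simp [dyadicWeight]
  | succ m hm ih =>
    have hshift : ∑ i ∈ range m, dyadicWeight (m + i) + dyadicWeight (2 * m) =
        ∑ i ∈ range m, dyadicWeight (m + 1 + i) + dyadicWeight m := by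
      rw [two_mul, ← sum_range_succ (fun i => dyadicWeight (m + i)), sum_range_succ']
      simp only [add_zero]; ac_rfl
    rw [sum_range_succ, show m + 1 + m = 2 * m + 1 by ring]
    linarith [dyadicWeight_two_mul_add_two_mul_add_one (Nat.pos_iff_ne_zero.1 hm)]

lemma Admissible.pos {A : Finset ℕ} (hA : Admissible A) {j : ℕ} (hj : j ∈ A) : 0 < j := by
  obtain ⟨hne, hcard⟩ := hA
  exact (card_pos.2 hne).trans_le (hcard.trans (min'_le A j hj))

lemma Admissible.sum_dyadicWeight_le_one {A : Finset ℕ} (hA : Admissible A) :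
    ∑ j ∈ A, dyadicWeight j ≤ 1 := by
  obtain ⟨hne, hcard⟩ := hA
  set m := A.min' hne
  calc ∑ j ∈ A, dyadicWeight j
      ≤ ∑ i ∈ range #A, dyadicWeight (m + i) :=
        A.sum_le_sum_range_add_of_antitone dyadicWeight_antitone (min'_le A)
    _ ≤ ∑ i ∈ range m, dyadicWeight (m + i) :=
        sum_le_sum_of_subset_of_nonneg (range_subset_range.2 hcard)
          fun _ _ _ => dyadicWeight_nonneg _
    _ = 1 := sum_range_dyadicWeight_add_self ((card_pos.2 hne).trans_le hcard)

lemma schreierBlock_eq_zero {n j : ℕ} (h : n ≠ Nat.log 2 j + 1) : schreierBlock n j = 0 := by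
  refine if_neg fun ⟨hlo, hhi⟩ => h ?_
  have hn : n ≠ 0 := by rintro rfl; simp at hlo hhi; omega
  have hlt : j < 2 ^ (n - 1 + 1) := by
    rw [Nat.sub_add_cancel (Nat.pos_iff_ne_zero.2 hn)]
    have := Nat.one_le_two_pow (n := n)
    omega
  have := Nat.log_eq_of_pow_le_of_lt_pow hlo hlt
  omega

lemma schreierBlock_log_add_one_sq {j : ℕ} (hj : j ≠ 0) :
    schreierBlock (Nat.log 2 j + 1) j ^ 2 = dyadicWeight j := by
  have hlo := Nat.pow_log_le_self 2 hj
  have hhi := Nat.lt_pow_succ_log_self one_lt_two j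
  rw [schreierBlock, if_pos ⟨by simpa using hlo, by omega⟩, dyadicWeight, ← Real.rpow_natCast,
    ← Real.rpow_mul zero_le_two, ← Real.rpow_natCast, ← Real.rpow_neg zero_le_two]
  push_cast
  ring_nf

lemma sq_sum_schreierBlock_le (s : Finset ℕ) {j : ℕ} (hj : j ≠ 0) :
    (∑ n ∈ s, schreierBlock n j) ^ 2 ≤ dyadicWeight j := by
  have hsingle : ∀ n, schreierBlock n j =
      if Nat.log 2 j + 1 = n then schreierBlock (Nat.log 2 j + 1) j else 0 := by
    intro n
    split_ifs with h
    · rw [h]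
    · exact schreierBlock_eq_zero (Ne.symm h)
  rw [sum_congr rfl fun n _ => hsingle n, sum_ite_eq]
  split_ifs
  · exact (schreierBlock_log_add_one_sq hj).le
  · simpa using dyadicWeight_nonneg j

lemma sum_schreierBlock_one {N : ℕ} (hN : 1 ≤ N) : ∑ n ∈ Icc 1 N, schreierBlock n 1 = 1 := by
  rw [sum_eq_single_of_mem 1 (mem_Icc.2 ⟨le_rfl, hN⟩)
    fun n _ hn => schreierBlock_eq_zero (by simpa using hn)]
  norm_num [schreierBlock]

/-- For every `N ≥ 1`, the Schreier-2 norm of `u_1 + ⋯ + u_N` equals `1`. -/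
theorem statement6 (N : ℕ) (hN : 1 ≤ N) :
    schreierTwoNorm (fun j => ∑ n ∈ Finset.Icc 1 N, schreierBlock n j) = 1 := by
  refine IsGreatest.csSup_eq ⟨⟨{1}, ⟨singleton_nonempty 1, by simp⟩, ?_⟩, ?_⟩
  · simp [sum_schreierBlock_one hN]
  · rintro r ⟨A, hA, rfl⟩
    refine Real.sqrt_le_one.2 ((sum_le_sum fun j hj => ?_).trans hA.sum_dyadicWeight_le_one)
    exact sq_sum_schreierBlock_le _ (hA.pos hj).ne'
end

section
/- Define g_0 : ℕ → ℕ by g_0(k) = k + 1 and, recursively, g_{n+1}(k) = g_n^{(k)}(k), where g_n^{(k)} denotes the k-fold iterate of g_n. For m ≥ 3 let α(m) denote the unique integer i with g_i(2) ≤ m < g_{i+1}(2). Then for every n with α(n) ≥ 2 (and n ≥ 2), one has α(n^n) ≤ α(n) + 2; equivalently, if i ≥ 2 and n ≤ g_{i+1}(2), then n^n ≤ g_{i+2}(2). -/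
/-- The hierarchy of rapidly growing functions: `g 0 k = k + 1` and
`g (n+1) k = (g n)^[k] k`, the `k`-fold iterate of `g n` evaluated at `k`. -/
def ackHierarchy : ℕ → ℕ → ℕ
  | 0 => fun k => k + 1
  | n + 1 => fun k => (ackHierarchy n)^[k] k

/-!
Every level of the hierarchy is inflationary and monotone, and the levels increase with the
index. Since `g 2 k = k * 2 ^ k ≥ n * k` once `k ≥ n`, iterating `n` times from `n` gives
`n ^ n ≤ g 3 n`. Hence for `i ≥ 2` and `n ≤ g (i+1) 2`,
`n ^ n ≤ g 3 n ≤ g (i+1) n ≤ g (i+1) (g (i+1) 2) = g (i+2) 2`, and the bound on `α (n ^ n)`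
follows because `m ↦ g m 2` is strictly increasing.
-/

open Function

theorem ackHierarchy_succ_apply (n k : ℕ) :
    ackHierarchy (n + 1) k = (ackHierarchy n)^[k] k := rfl

theorem id_le_ackHierarchy : ∀ n, id ≤ ackHierarchy n
  | 0, k => k.le_succ
  | n + 1, k => id_le_iterate_of_id_le (id_le_ackHierarchy n) k k

theorem lt_ackHierarchy {k : ℕ} (hk : 0 < k) : ∀ n, k < ackHierarchy n k
  | 0 => k.lt_succ_self
  | n + 1 => by
    obtain ⟨k, rfl⟩ := Nat.exists_eq_add_of_lt hk
    rw [ackHierarchy_succ_apply, iterate_succ_apply]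
    exact (lt_ackHierarchy hk n).trans_le
      (id_le_iterate_of_id_le (id_le_ackHierarchy n) _ _)

theorem monotone_ackHierarchy : ∀ n, Monotone (ackHierarchy n)
  | 0 => fun _ _ h => Nat.succ_le_succ h
  | n + 1 => fun a b hab =>
    calc (ackHierarchy n)^[a] a ≤ (ackHierarchy n)^[a] b :=
          (monotone_ackHierarchy n).iterate a hab
      _ ≤ (ackHierarchy n)^[b] b :=
        monotone_iterate_of_id_le (id_le_ackHierarchy n) hab b

theorem ackHierarchy_le_succ {k : ℕ} (hk : 0 < k) (n : ℕ) :
    ackHierarchy n k ≤ ackHierarchy (n + 1) k :=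
  monotone_iterate_of_id_le (id_le_ackHierarchy n) hk k

theorem monotone_ackHierarchy_index {k : ℕ} (hk : 0 < k) :
    Monotone fun n => ackHierarchy n k :=
  monotone_nat_of_le_succ (ackHierarchy_le_succ hk)

theorem ackHierarchy_succ_two (n : ℕ) :
    ackHierarchy (n + 1) 2 = ackHierarchy n (ackHierarchy n 2) := rfl

theorem strictMono_ackHierarchy_two : StrictMono fun n => ackHierarchy n 2 :=
  strictMono_nat_of_lt_succ fun n => by
    rw [ackHierarchy_succ_two]
    exact lt_ackHierarchy ((lt_ackHierarchy two_pos n).trans' two_pos) n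

theorem ackHierarchy_one (k : ℕ) : ackHierarchy 1 k = 2 * k := by
  rw [ackHierarchy_succ_apply]
  exact (Nat.succ_iterate k k).trans (two_mul k).symm

theorem ackHierarchy_two (k : ℕ) : ackHierarchy 2 k = 2 ^ k * k := by
  rw [ackHierarchy_succ_apply, funext ackHierarchy_one, mul_left_iterate_apply]

theorem pow_le_iterate_ackHierarchy_two {n : ℕ} (hn : 0 < n) (m : ℕ) :
    n ^ m ≤ (ackHierarchy 2)^[m] n := by
  induction m with
  | zero => exact hn
  | succ m ih =>
    set y := (ackHierarchy 2)^[m] n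
    have hny : n ≤ y := id_le_iterate_of_id_le (id_le_ackHierarchy 2) m n
    have hn2y : n ≤ 2 ^ y := n.lt_two_pow_self.le.trans (Nat.pow_le_pow_right two_pos hny)
    calc n ^ (m + 1) = n * n ^ m := pow_succ' n m
      _ ≤ 2 ^ y * y := Nat.mul_le_mul hn2y ih
      _ = (ackHierarchy 2)^[m + 1] n := by rw [iterate_succ_apply', ackHierarchy_two]

theorem pow_self_le_ackHierarchy_three {n : ℕ} (hn : 0 < n) : n ^ n ≤ ackHierarchy 3 n :=
  pow_le_iterate_ackHierarchy_two hn n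

theorem pow_self_le_ackHierarchy_add_two {i n : ℕ} (hi : 2 ≤ i)
    (hn : n ≤ ackHierarchy (i + 1) 2) : n ^ n ≤ ackHierarchy (i + 2) 2 := by
  rcases n.eq_zero_or_pos with rfl | hn0
  · rw [pow_zero]
    exact (one_lt_two.trans (lt_ackHierarchy two_pos _)).le
  calc n ^ n ≤ ackHierarchy 3 n := pow_self_le_ackHierarchy_three hn0
    _ ≤ ackHierarchy (i + 1) n := monotone_ackHierarchy_index hn0 (by omega)
    _ ≤ ackHierarchy (i + 1) (ackHierarchy (i + 1) 2) := monotone_ackHierarchy _ hn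
    _ = ackHierarchy (i + 2) 2 := (ackHierarchy_succ_two _).symm

/-- If `i ≥ 2` and `n ≤ g (i+1) 2`, then `n^n ≤ g (i+2) 2`.  Equivalently,
in terms of the inverse-Ackermann function `α` (characterized by `g (α m) 2 ≤ m < g (α m + 1) 2`):
for every `n ≥ 2` with `α n ≥ 2`, one has `α (n^n) ≤ α n + 2`. -/
theorem statement14 :
    (∀ i n : ℕ, 2 ≤ i → n ≤ ackHierarchy (i + 1) 2 → n ^ n ≤ ackHierarchy (i + 2) 2) ∧
      (∀ n i j : ℕ, 2 ≤ n → 2 ≤ i →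
        ackHierarchy i 2 ≤ n → n < ackHierarchy (i + 1) 2 →
        ackHierarchy j 2 ≤ n ^ n → n ^ n < ackHierarchy (j + 1) 2 → j ≤ i + 2) := by
  refine ⟨fun i n hi hn => pow_self_le_ackHierarchy_add_two hi hn, ?_⟩
  intro n i j _ hi _ hn hj _
  have hnn : n ^ n < ackHierarchy (i + 3) 2 :=
    (pow_self_le_ackHierarchy_add_two hi hn.le).trans_lt
      (strictMono_ackHierarchy_two (by omega))
  exact Nat.lt_succ_iff.mp (strictMono_ackHierarchy_two.lt_iff_lt.mp (hj.trans_lt hnn))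
end
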